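/- Let C be a 3×3 unitary matrix with entries a^{(i,j)}, e^{iΔ} = det C, and λ ∈ ℝ with e^{iλ} ≠ a^{(2,2)} and a^{(1,1)}e^{iλ} − e^{iΔ} conj(a^{(3,3)}) ≠ 0. Then tr T(λ) = e^{iλ}/A(λ) + e^{−iλ}/conj(D(λ)), where in particular D(λ) ≠ 0. -/

import Mathlib

open Complex Matrix ComplexConjugate

noncomputable section

/-- `A(λ)` for a 3×3 coin matrix `M`. -/
def coefA (M : Matrix (Fin 3) (Fin 3) ℂ) (lam : ℝ) : ℂ :=
  M 0 0 + M 0 1 * M 1 0 / (Complex.exp (lam * Complex.I) - M 1 1)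

/-- `D(λ)` for a 3×3 coin matrix `M`. -/
def coefD (M : Matrix (Fin 3) (Fin 3) ℂ) (lam : ℝ) : ℂ :=
  M 2 2 + M 2 1 * M 1 2 / (Complex.exp (lam * Complex.I) - M 1 1)

/-- The transfer matrix `T(λ)` of a 3×3 coin matrix `M`. -/
def transfer (M : Matrix (Fin 3) (Fin 3) ℂ) (lam : ℝ) : Matrix (Fin 2) (Fin 2) ℂ :=
  (M 0 0 * Complex.exp (lam * Complex.I) - M.det * conj (M 2 2))⁻¹ •
    !![Complex.exp (lam * Complex.I) * (Complex.exp (lam * Complex.I) - M 1 1),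
        -(M 0 2 * Complex.exp (lam * Complex.I)) - M.det * conj (M 2 0);
        M 2 0 * Complex.exp (lam * Complex.I) + M.det * conj (M 0 2),
        -(M.det * (Complex.exp (-(lam * Complex.I)) - conj (M 1 1)))]

/-!
For a unitary `C` the adjugate is `det C • Cᴴ`, so every 2×2 minor of `C` is `det C` times a
conjugated entry. Hence `A(λ) (e^{iλ} - a₂₂)` is exactly the denominator of `T(λ)`, and, using
`|det C| = |e^{iλ}| = 1`, so is `-det C · conj D(λ) (e^{-iλ} - conj a₂₂)` up to the factor
`e^{-iλ}`. The two terms of the claimed formula are then the two diagonal entries of `T(λ)`.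
-/

namespace Matrix

section UnitaryGroup

variable {n α : Type*} [Fintype n] [DecidableEq n] [CommRing α] [StarRing α]
  {U : Matrix n n α}

theorem adjugate_eq_det_smul_star_of_mem_unitaryGroup (hU : U ∈ unitaryGroup n α) :
    U.adjugate = U.det • star U :=
  calc U.adjugate = (star U * U) * U.adjugate := by rw [mem_unitaryGroup_iff'.mp hU, one_mul]
    _ = U.det • star U := by rw [Matrix.mul_assoc, mul_adjugate, Matrix.mul_smul, Matrix.mul_one]

theorem adjugate_apply_of_mem_unitaryGroup (hU : U ∈ unitaryGroup n α) (i j : n) :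
    U.adjugate i j = U.det * star (U j i) := by
  rw [adjugate_eq_det_smul_star_of_mem_unitaryGroup hU, smul_apply, star_apply, smul_eq_mul]

theorem det_mul_conj_det_of_mem_unitaryGroup (hU : U ∈ unitaryGroup n α) :
    U.det * conj U.det = 1 :=
  Unitary.mul_star_self_of_mem (det_of_mem_unitary hU)

end UnitaryGroup

section FinThree

variable {α : Type*} [CommRing α] [StarRing α] {U : Matrix (Fin 3) (Fin 3) α}

theorem det_mul_conj_apply_zero_zero_of_mem_unitaryGroup (hU : U ∈ unitaryGroup (Fin 3) α) :
    U.det * conj (U 0 0) = U 1 1 * U 2 2 - U 1 2 * U 2 1 := by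
  rw [starRingEnd_apply, ← adjugate_apply_of_mem_unitaryGroup hU, adjugate_fin_three]
  rfl

theorem det_mul_conj_apply_two_two_of_mem_unitaryGroup (hU : U ∈ unitaryGroup (Fin 3) α) :
    U.det * conj (U 2 2) = U 0 0 * U 1 1 - U 0 1 * U 1 0 := by
  rw [starRingEnd_apply, ← adjugate_apply_of_mem_unitaryGroup hU, adjugate_fin_three]
  rfl

end FinThree

end Matrix

section Transfer

variable {M : Matrix (Fin 3) (Fin 3) ℂ} {lam : ℝ}

theorem coefA_mul_sub (hM : M ∈ Matrix.unitaryGroup (Fin 3) ℂ)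
    (hne : Complex.exp (lam * Complex.I) ≠ M 1 1) :
    coefA M lam * (Complex.exp (lam * Complex.I) - M 1 1) =
      M 0 0 * Complex.exp (lam * Complex.I) - M.det * conj (M 2 2) := by
  have := sub_ne_zero.mpr hne
  rw [coefA]
  field_simp
  linear_combination det_mul_conj_apply_two_two_of_mem_unitaryGroup hM

theorem coefD_mul_sub (hM : M ∈ Matrix.unitaryGroup (Fin 3) ℂ)
    (hne : Complex.exp (lam * Complex.I) ≠ M 1 1) :
    coefD M lam * (Complex.exp (lam * Complex.I) - M 1 1) =
      M 2 2 * Complex.exp (lam * Complex.I) - M.det * conj (M 0 0) := by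
  have := sub_ne_zero.mpr hne
  rw [coefD]
  field_simp
  linear_combination det_mul_conj_apply_zero_zero_of_mem_unitaryGroup hM

theorem conj_exp_mul_I (lam : ℝ) :
    conj (Complex.exp (lam * Complex.I)) = Complex.exp (-(lam * Complex.I)) := by
  rw [← Complex.exp_conj, map_mul, Complex.conj_ofReal, Complex.conj_I, mul_neg]

theorem neg_det_mul_conj_coefD_mul_sub (hM : M ∈ Matrix.unitaryGroup (Fin 3) ℂ)
    (hne : Complex.exp (lam * Complex.I) ≠ M 1 1) :
    -M.det * conj (coefD M lam) * (Complex.exp (-(lam * Complex.I)) - conj (M 1 1)) =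
      Complex.exp (-(lam * Complex.I)) *
        (M 0 0 * Complex.exp (lam * Complex.I) - M.det * conj (M 2 2)) := by
  have hD := congrArg conj (coefD_mul_sub hM hne)
  simp only [map_mul, map_sub, conj_exp_mul_I, Complex.conj_conj] at hD
  have hexp : Complex.exp (-(lam * Complex.I)) * Complex.exp (lam * Complex.I) = 1 := by
    rw [← Complex.exp_add, neg_add_cancel, Complex.exp_zero]
  linear_combination -M.det * hD - M 0 0 * hexp
    + M 0 0 * det_mul_conj_det_of_mem_unitaryGroup hM

theorem coefD_ne_zero (hM : M ∈ Matrix.unitaryGroup (Fin 3) ℂ)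
    (hne : Complex.exp (lam * Complex.I) ≠ M 1 1)
    (hden : M 0 0 * Complex.exp (lam * Complex.I) - M.det * conj (M 2 2) ≠ 0) :
    coefD M lam ≠ 0 := by
  intro hD
  have h := neg_det_mul_conj_coefD_mul_sub hM hne
  rw [hD, map_zero, mul_zero, zero_mul, eq_comm] at h
  exact mul_ne_zero (Complex.exp_ne_zero _) hden h

theorem exp_mul_I_div_coefA (hM : M ∈ Matrix.unitaryGroup (Fin 3) ℂ)
    (hne : Complex.exp (lam * Complex.I) ≠ M 1 1) :
    Complex.exp (lam * Complex.I) / coefA M lam =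
      Complex.exp (lam * Complex.I) * (Complex.exp (lam * Complex.I) - M 1 1) /
        (M 0 0 * Complex.exp (lam * Complex.I) - M.det * conj (M 2 2)) := by
  rw [← coefA_mul_sub hM hne]
  exact (mul_div_mul_right _ _ (sub_ne_zero.mpr hne)).symm

theorem exp_neg_mul_I_div_conj_coefD (hM : M ∈ Matrix.unitaryGroup (Fin 3) ℂ)
    (hne : Complex.exp (lam * Complex.I) ≠ M 1 1)
    (hden : M 0 0 * Complex.exp (lam * Complex.I) - M.det * conj (M 2 2) ≠ 0) :
    Complex.exp (-(lam * Complex.I)) / conj (coefD M lam) =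
      -(M.det * (Complex.exp (-(lam * Complex.I)) - conj (M 1 1))) /
        (M 0 0 * Complex.exp (lam * Complex.I) - M.det * conj (M 2 2)) := by
  have hD : conj (coefD M lam) ≠ 0 := (map_ne_zero _).mpr (coefD_ne_zero hM hne hden)
  rw [div_eq_div_iff hD hden]
  linear_combination -neg_det_mul_conj_coefD_mul_sub hM hne

theorem trace_transfer (M : Matrix (Fin 3) (Fin 3) ℂ) (lam : ℝ) :
    (transfer M lam).trace =
      (Complex.exp (lam * Complex.I) * (Complex.exp (lam * Complex.I) - M 1 1) -
          M.det * (Complex.exp (-(lam * Complex.I)) - conj (M 1 1))) /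
        (M 0 0 * Complex.exp (lam * Complex.I) - M.det * conj (M 2 2)) := by
  rw [transfer, trace_smul, trace_fin_two_of, smul_eq_mul, inv_mul_eq_div,
    ← sub_eq_add_neg]

end Transfer

/-- `tr T(λ) = e^{iλ}/A(λ) + e^{−iλ}/conj D(λ)`, where in
particular `D(λ) ≠ 0`. -/
theorem trace_transfer_eq (M : Matrix (Fin 3) (Fin 3) ℂ)
    (hM : M ∈ Matrix.unitaryGroup (Fin 3) ℂ) (lam : ℝ)
    (hne : Complex.exp (lam * Complex.I) ≠ M 1 1)
    (hden : M 0 0 * Complex.exp (lam * Complex.I) - M.det * conj (M 2 2) ≠ 0) :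
    coefD M lam ≠ 0 ∧
    (transfer M lam).trace =
      Complex.exp (lam * Complex.I) / coefA M lam +
        Complex.exp (-(lam * Complex.I)) / conj (coefD M lam) := by
  refine ⟨coefD_ne_zero hM hne hden, ?_⟩
  rw [trace_transfer, exp_mul_I_div_coefA hM hne, exp_neg_mul_I_div_conj_coefD hM hne hden]
  ring
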